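/- Let E be a finite-dimensional Euclidean space and γ the standard Gaussian measure on E. For every continuous function f : E → ℝ (bounded from below), ∫_E e^{−f} dγ ≤ ∫_E e^{−Sf} dγ. -/

import Mathlib

open MeasureTheory Real

/-- The standard Gaussian probability measure on a finite-dimensional Euclidean
space `E`, given by its density `(2π)^{-dim E/2} e^{-|x|²/2}`. -/
noncomputable def gaussOf (E : Type*) [NormedAddCommGroup E] [InnerProductSpace ℝ E]
    [FiniteDimensional ℝ E] [MeasurableSpace E] [BorelSpace E] : Measure E :=
  volume.withDensity fun x =>
    ENNReal.ofReal ((2 * π) ^ (-(Module.finrank ℝ E : ℝ) / 2) * Real.exp (-‖x‖ ^ 2 / 2))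

/-- The symmetrisation `Sf(x) = inf_u ( ½(f(u+x) + f(u-x)) + ½|u|² )`. -/
noncomputable def Ssym {E : Type*} [NormedAddCommGroup E] (f : E → ℝ) (x : E) : ℝ :=
  ⨅ u : E, ((f (u + x) + f (u - x)) / 2 + ‖u‖ ^ 2 / 2)

/-!
Since `dγ ∝ e^{-‖x‖²/2} dx`, the claim is `∫ e^{-V} ≤ ∫ e^{-W}` for `V = ‖·‖²/2 + f` and
`W = ‖·‖²/2 + Sf`. Taking `u = (x + y)/2` in the infimum defining `Sf((x - y)/2)` and using the
parallelogram law gives `W((x - y)/2) ≤ (V x + V y)/2`, so `F = e^{-V}`, `G = F(-·)` and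
`H = e^{-W}` satisfy `F x · G y ≤ H((x + y)/2)²`, and the midpoint Prékopa–Leindler inequality
for Lebesgue measure yields `(∫ F)² ≤ (∫ H)²`.

On `ℝ`, Prékopa–Leindler follows from the Brunn–Minkowski inequality `|S| + |T| ≤ 2 |(S + T)/2|`
applied to level sets (layer-cake formula), after rescaling `f` and `g` to a common supremum; it
passes to `ℝⁿ` by Fubini and to `E` through an orthonormal basis.
-/

open Set ENNReal

lemma volume_image_half_add (a : ℝ) (s : Set ℝ) :
    volume ((fun y => (a + y) / 2) '' s) = 2⁻¹ * volume s := by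
  have : (fun y : ℝ => (a + y) / 2) = AffineMap.homothety a (2⁻¹ : ℝ) := by
    ext y
    simp only [AffineMap.homothety_apply, vsub_eq_sub, smul_eq_mul, vadd_eq_add]
    ring
  rw [this, Measure.addHaar_image_homothety, Module.finrank_self, pow_one,
    abs_of_pos (by norm_num), ENNReal.ofReal_inv_of_pos two_pos, ENNReal.ofReal_ofNat]

lemma volume_add_volume_le_of_isCompact {K L U : Set ℝ} (hK : IsCompact K) (hL : IsCompact L)
    (hKne : K.Nonempty) (hLne : L.Nonempty) (hU : ∀ x ∈ K, ∀ y ∈ L, (x + y) / 2 ∈ U) :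
    volume K + volume L ≤ 2 * volume U := by
  set x₀ := sSup K
  set y₀ := sInf L
  have hx₀ : x₀ ∈ K := hK.sSup_mem hKne
  have hy₀ : y₀ ∈ L := hL.sInf_mem hLne
  set P := (fun y => (x₀ + y) / 2) '' L
  set Q := (fun x => (y₀ + x) / 2) '' K
  have hPU : P ⊆ U := by rintro _ ⟨y, hy, rfl⟩; exact hU _ hx₀ _ hy
  have hQU : Q ⊆ U := by rintro _ ⟨x, hx, rfl⟩; simpa only [add_comm] using hU _ hx _ hy₀
  -- `U` contains the half-size copies `P` of `L` and `Q` of `K`, which overlap in at most one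
  -- point because `x₀ = max K` and `y₀ = min L`.
  have hPQ : P ∩ Q ⊆ {(x₀ + y₀) / 2} := by
    rintro z ⟨⟨y, hy, rfl⟩, ⟨x, hx, hxy⟩⟩
    have : x ≤ x₀ := le_csSup hK.bddAbove hx
    have : y₀ ≤ y := csInf_le hL.bddBelow hy
    rw [mem_singleton_iff]
    linarith
  have hQ : MeasurableSet Q := (hK.image (by fun_prop)).isClosed.measurableSet
  calc volume K + volume L = 2 * (2⁻¹ * volume L + 2⁻¹ * volume K) := by
        rw [← mul_add, ← mul_assoc, ENNReal.mul_inv_cancel two_ne_zero ofNat_ne_top, one_mul,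
          add_comm]
    _ = 2 * volume (P ∪ Q) := by
        rw [measure_union₀ hQ.nullMeasurableSet (measure_mono_null hPQ (measure_singleton _)),
          volume_image_half_add, volume_image_half_add]
    _ ≤ 2 * volume U := by gcongr; exact union_subset hPU hQU

lemma volume_add_volume_le_of_midpoint_mem {S T U : Set ℝ} (hS : MeasurableSet S)
    (hT : MeasurableSet T) (hSne : S.Nonempty) (hTne : T.Nonempty)
    (hU : ∀ x ∈ S, ∀ y ∈ T, (x + y) / 2 ∈ U) :
    volume S + volume T ≤ 2 * volume U := by
  obtain ⟨s, hs⟩ := hSne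
  obtain ⟨t, ht⟩ := hTne
  rw [hS.measure_eq_iSup_isCompact, hT.measure_eq_iSup_isCompact]
  simp only [iSup_and']
  refine ENNReal.biSup_add_biSup_le' ⟨∅, empty_subset _, isCompact_empty⟩
    ⟨∅, empty_subset _, isCompact_empty⟩ fun K ⟨hKS, hK⟩ L ⟨hLT, hL⟩ => ?_
  calc volume K + volume L ≤ volume (insert s K) + volume (insert t L) := by
        gcongr <;> exact subset_insert _ _
    _ ≤ 2 * volume U :=
        volume_add_volume_le_of_isCompact (hK.insert s) (hL.insert t) (insert_nonempty _ _)
          (insert_nonempty _ _) fun x hx y hy =>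
            hU x (insert_subset hs hKS hx) y (insert_subset ht hLT hy)

lemma setLIntegral_Ioi_meas_le_eq_Ioo {α : Type*} [MeasurableSpace α] (μ : Measure α)
    {φ : α → ℝ} {s : ℝ} (hs : 0 ≤ s) (hφ : ∀ x, φ x ≤ s) :
    ∫⁻ t in Ioi 0, μ {x | t ≤ φ x} = ∫⁻ t in Ioo 0 s, μ {x | t ≤ φ x} := by
  have hvanish : ∫⁻ t in Ioi s, μ {x | t ≤ φ x} = 0 := by
    refine setLIntegral_eq_zero measurableSet_Ioi fun t (ht : s < t) => ?_
    rw [Pi.zero_apply, measure_eq_zero_iff_ae_notMem]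
    exact ae_of_all _ fun x (hx : t ≤ φ x) => (ht.trans_le hx).not_ge (hφ x)
  rw [← Ioc_union_Ioi_eq_Ioi hs, lintegral_union measurableSet_Ioi (Ioc_disjoint_Ioi le_rfl),
    hvanish, add_zero, setLIntegral_congr Ioo_ae_eq_Ioc]

lemma lintegral_add_lintegral_le_of_isLUB {f g h : ℝ → ℝ} {s : ℝ}
    (hf : Measurable f) (hg : Measurable g) (hh : Measurable h)
    (hf₀ : 0 ≤ f) (hg₀ : 0 ≤ g) (hh₀ : 0 ≤ h)
    (hfs : IsLUB (range f) s) (hgs : IsLUB (range g) s)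
    (hfgh : ∀ x y, f x * g y ≤ h ((x + y) / 2) ^ 2) :
    (∫⁻ x, ENNReal.ofReal (f x)) + ∫⁻ x, ENNReal.ofReal (g x) ≤ 2 * ∫⁻ x, ENNReal.ofReal (h x) := by
  have hs : 0 ≤ s := (hf₀ 0).trans (hfs.1 (mem_range_self 0))
  have hlevel : ∀ t ∈ Ioo 0 s,
      volume {x | t ≤ f x} + volume {x | t ≤ g x} ≤ 2 * volume {x | t ≤ h x} := by
    rintro t ⟨ht, hts⟩
    obtain ⟨-, ⟨x, rfl⟩, hx, -⟩ := hfs.exists_between hts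
    obtain ⟨-, ⟨y, rfl⟩, hy, -⟩ := hgs.exists_between hts
    exact volume_add_volume_le_of_midpoint_mem (hf measurableSet_Ici) (hg measurableSet_Ici)
      ⟨x, hx.le⟩ ⟨y, hy.le⟩ fun x (hx : t ≤ f x) y (hy : t ≤ g y) =>
        (pow_le_pow_iff_left₀ ht.le (hh₀ _) two_ne_zero).1 <|
          ((sq t).trans_le (mul_le_mul hx hy ht.le (hf₀ x))).trans (hfgh x y)
  rw [lintegral_eq_lintegral_meas_le _ (ae_of_all _ hf₀) hf.aemeasurable,
    lintegral_eq_lintegral_meas_le _ (ae_of_all _ hg₀) hg.aemeasurable,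
    lintegral_eq_lintegral_meas_le _ (ae_of_all _ hh₀) hh.aemeasurable,
    setLIntegral_Ioi_meas_le_eq_Ioo _ hs fun x => hfs.1 (mem_range_self x),
    setLIntegral_Ioi_meas_le_eq_Ioo _ hs fun x => hgs.1 (mem_range_self x)]
  calc _ ≤ ∫⁻ t in Ioo 0 s, (volume {x | t ≤ f x} + volume {x | t ≤ g x}) :=
        le_lintegral_add _ _
    _ ≤ ∫⁻ t in Ioo 0 s, 2 * volume {x | t ≤ h x} := setLIntegral_mono' measurableSet_Ioo hlevel
    _ = 2 * ∫⁻ t in Ioo 0 s, volume {x | t ≤ h x} := lintegral_const_mul' _ _ ofNat_ne_top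
    _ ≤ 2 * ∫⁻ t in Ioi 0, volume {x | t ≤ h x} := by gcongr; exact Ioo_subset_Ioi_self

lemma ENNReal.four_mul_le_sq_add (a b : ℝ≥0∞) : 4 * (a * b) ≤ (a + b) ^ 2 := by
  wlog hab : a ≤ b generalizing a b
  · simpa only [mul_comm, add_comm] using this b a (le_of_not_ge hab)
  obtain ⟨d, rfl⟩ := exists_add_of_le hab
  calc 4 * (a * (a + d)) ≤ 4 * a ^ 2 + 4 * (a * d) + d ^ 2 := by ring_nf; exact le_self_add
    _ = (a + (a + d)) ^ 2 := by ring

lemma ENNReal.mul_le_sq_of_add_le_two_mul {a b c : ℝ≥0∞} (h : a + b ≤ 2 * c) : a * b ≤ c ^ 2 := by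
  have : 4 * (a * b) ≤ 4 * c ^ 2 :=
    calc 4 * (a * b) ≤ (2 * c) ^ 2 := (four_mul_le_sq_add a b).trans (by gcongr)
      _ = 4 * c ^ 2 := by ring
  exact (ENNReal.mul_le_mul_iff_right (by norm_num) (by norm_num)).1 this

lemma lintegral_ofReal_const_mul {α : Type*} [MeasurableSpace α] {μ : Measure α} {r : ℝ}
    (hr : 0 ≤ r) (f : α → ℝ) :
    ∫⁻ x, ENNReal.ofReal (r * f x) ∂μ = ENNReal.ofReal r * ∫⁻ x, ENNReal.ofReal (f x) ∂μ := by
  simp only [ENNReal.ofReal_mul hr]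
  exact lintegral_const_mul' _ _ ofReal_ne_top

lemma lintegral_mul_lintegral_le_of_bddAbove {f g h : ℝ → ℝ}
    (hf : Measurable f) (hg : Measurable g) (hh : Measurable h)
    (hf₀ : 0 ≤ f) (hg₀ : 0 ≤ g) (hh₀ : 0 ≤ h)
    (hfb : BddAbove (range f)) (hgb : BddAbove (range g))
    (hfgh : ∀ x y, f x * g y ≤ h ((x + y) / 2) ^ 2) :
    (∫⁻ x, ENNReal.ofReal (f x)) * ∫⁻ x, ENNReal.ofReal (g x) ≤
      (∫⁻ x, ENNReal.ofReal (h x)) ^ 2 := by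
  have ha := isLUB_csSup (range_nonempty f) hfb
  have hb := isLUB_csSup (range_nonempty g) hgb
  set a := sSup (range f)
  set b := sSup (range g)
  rcases (show 0 ≤ a from (hf₀ 0).trans (ha.1 (mem_range_self 0))).eq_or_lt with ha₀ | ha₀
  · have : ∀ x, f x = 0 := fun x => le_antisymm (ha₀ ▸ ha.1 (mem_range_self x)) (hf₀ x)
    simp [this]
  rcases (show 0 ≤ b from (hg₀ 0).trans (hb.1 (mem_range_self 0))).eq_or_lt with hb₀ | hb₀
  · have : ∀ x, g x = 0 := fun x => le_antisymm (hb₀ ▸ hb.1 (mem_range_self x)) (hg₀ x)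
    simp [this]
  -- Rescaling `f` by `r` and `g` by `r⁻¹` gives both the common supremum `√a √b`.
  set r := √b / √a
  have hsa : 0 < √a := Real.sqrt_pos.2 ha₀
  have hsb : 0 < √b := Real.sqrt_pos.2 hb₀
  have hr : 0 < r := div_pos hsb hsa
  have hra : r * a = √a * √b := by
    simp only [r]; field_simp; rw [Real.sq_sqrt ha₀.le]
  have hrb : r⁻¹ * b = √a * √b := by
    simp only [r, inv_div]; field_simp; rw [Real.sq_sqrt hb₀.le]
  have hsum := lintegral_add_lintegral_le_of_isLUB (f := fun x => r * f x) (s := √a * √b)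
    (g := fun x => r⁻¹ * g x) (hf.const_mul r) (hg.const_mul r⁻¹) hh
    (fun x => mul_nonneg hr.le (hf₀ x)) (fun x => mul_nonneg (inv_nonneg.2 hr.le) (hg₀ x)) hh₀
    (by rw [← hra, range_comp']; exact ha.mul_left hr.le)
    (by rw [← hrb, range_comp']; exact hb.mul_left (inv_nonneg.2 hr.le))
    fun x y => by rw [mul_mul_mul_comm, mul_inv_cancel₀ hr.ne', one_mul]; exact hfgh x y
  rw [lintegral_ofReal_const_mul hr.le, lintegral_ofReal_const_mul (inv_nonneg.2 hr.le)] at hsum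
  calc (∫⁻ x, ENNReal.ofReal (f x)) * ∫⁻ x, ENNReal.ofReal (g x)
      = ENNReal.ofReal r * (∫⁻ x, ENNReal.ofReal (f x)) *
          (ENNReal.ofReal r⁻¹ * ∫⁻ x, ENNReal.ofReal (g x)) := by
        rw [mul_mul_mul_comm, ← ENNReal.ofReal_mul hr.le, mul_inv_cancel₀ hr.ne',
          ENNReal.ofReal_one, one_mul]
    _ ≤ (∫⁻ x, ENNReal.ofReal (h x)) ^ 2 := ENNReal.mul_le_sq_of_add_le_two_mul hsum

lemma iSup_lintegral_min_natCast {α : Type*} [MeasurableSpace α] {μ : Measure α}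
    {f : α → ℝ≥0∞} (hf : Measurable f) : ⨆ n : ℕ, ∫⁻ x, min (f x) n ∂μ = ∫⁻ x, f x ∂μ := by
  rw [← lintegral_iSup (fun n => hf.min measurable_const)
    fun i j hij x => min_le_min_left _ (Nat.mono_cast hij)]
  congr with x
  rw [← inf_iSup_eq, ENNReal.iSup_natCast, inf_top_eq]

lemma min_mul_min_le_min_sq {a b c : ℝ≥0∞} (n : ℝ≥0∞) (h : a * b ≤ c ^ 2) :
    min a n * min b n ≤ min c n ^ 2 := by
  rcases le_total c n with hcn | hnc
  · rw [min_eq_left hcn]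
    exact (mul_le_mul' (min_le_left _ _) (min_le_left _ _)).trans h
  · rw [min_eq_right hnc, sq]
    exact mul_le_mul' (min_le_right _ _) (min_le_right _ _)

section PrekopaLeindler

variable {E F : Type*} [AddCommGroup E] [Module ℝ E] [MeasurableSpace E]
  [AddCommGroup F] [Module ℝ F] [MeasurableSpace F]

def PrekopaLeindler (μ : Measure E) : Prop :=
  ∀ f g h : E → ℝ≥0∞, Measurable f → Measurable g → Measurable h →
    (∀ x y, f x * g y ≤ h (midpoint ℝ x y) ^ 2) →
    (∫⁻ x, f x ∂μ) * (∫⁻ x, g x ∂μ) ≤ (∫⁻ x, h x ∂μ) ^ 2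

lemma prekopaLeindler_volume_real : PrekopaLeindler (volume : Measure ℝ) := by
  intro f g h hf hg hh hfgh
  have htrunc (n : ℕ) :
      (∫⁻ x, min (f x) n) * (∫⁻ x, min (g x) n) ≤ (∫⁻ x, h x) ^ 2 := by
    have hfin (φ : ℝ → ℝ≥0∞) (x : ℝ) : min (φ x) n ≠ ∞ :=
      (min_le_right _ _).trans_lt (natCast_lt_top n) |>.ne
    have hbdd (φ : ℝ → ℝ≥0∞) : BddAbove (range fun x => (min (φ x) n).toReal) :=
      ⟨n, by rintro _ ⟨x, rfl⟩; exact toReal_le_of_le_ofReal n.cast_nonneg (by simp)⟩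
    have key := lintegral_mul_lintegral_le_of_bddAbove
      (hf.min measurable_const).ennreal_toReal (hg.min measurable_const).ennreal_toReal
      (hh.min measurable_const).ennreal_toReal (fun _ => toReal_nonneg) (fun _ => toReal_nonneg)
      (fun _ => toReal_nonneg) (hbdd f) (hbdd g) fun x y => by
        rw [← toReal_mul, ← toReal_pow]
        refine toReal_mono (pow_ne_top (hfin h _)) (min_mul_min_le_min_sq _ ?_)
        simpa only [midpoint_eq_smul_add, invOf_eq_inv, smul_eq_mul, inv_mul_eq_div]
          using hfgh x y
    simp only [ofReal_toReal (hfin _ _)] at key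
    exact key.trans (by gcongr with x; exact min_le_left _ _)
  rw [← iSup_lintegral_min_natCast hf, ← iSup_lintegral_min_natCast hg, ENNReal.iSup_mul]
  refine iSup_le fun i => ?_
  rw [ENNReal.mul_iSup]
  refine iSup_le fun j => (htrunc (max i j)).trans' <| mul_le_mul'
    (lintegral_mono fun x => min_le_min_left _ (Nat.mono_cast (le_max_left i j)))
    (lintegral_mono fun x => min_le_min_left _ (Nat.mono_cast (le_max_right i j)))

lemma PrekopaLeindler.prod {μ : Measure E} {ν : Measure F} [SFinite μ] [SFinite ν]
    (hμ : PrekopaLeindler μ) (hν : PrekopaLeindler ν) : PrekopaLeindler (μ.prod ν) := by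
  intro f g h hf hg hh hfgh
  have hsection (x y : E) :
      (∫⁻ b, f (x, b) ∂ν) * (∫⁻ b, g (y, b) ∂ν) ≤ (∫⁻ b, h (midpoint ℝ x y, b) ∂ν) ^ 2 :=
    hν _ _ _ (hf.comp measurable_prodMk_left) (hg.comp measurable_prodMk_left)
      (hh.comp measurable_prodMk_left) fun b b' => hfgh (x, b) (y, b')
  have := hμ _ _ _ hf.lintegral_prod_right' hg.lintegral_prod_right' hh.lintegral_prod_right'
    hsection
  rwa [← lintegral_prod _ hf.aemeasurable, ← lintegral_prod _ hg.aemeasurable,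
    ← lintegral_prod _ hh.aemeasurable] at this

lemma PrekopaLeindler.of_measurePreserving {μ : Measure E} {ν : Measure F}
    (hμ : PrekopaLeindler μ) {e : E → F} (he : MeasurePreserving e μ ν)
    (he_mid : ∀ x y, e (midpoint ℝ x y) = midpoint ℝ (e x) (e y)) : PrekopaLeindler ν := by
  intro f g h hf hg hh hfgh
  have := hμ (fun x => f (e x)) (fun x => g (e x)) (fun x => h (e x)) (hf.comp he.measurable)
    (hg.comp he.measurable) (hh.comp he.measurable) fun x y => by
      simpa only [he_mid] using hfgh (e x) (e y)
  rwa [he.lintegral_comp hf, he.lintegral_comp hg, he.lintegral_comp hh] at this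

lemma prekopaLeindler_volume_pi (n : ℕ) : PrekopaLeindler (volume : Measure (Fin n → ℝ)) := by
  induction n with
  | zero =>
    intro f g h _ _ _ hfgh
    simpa [Measure.volume_pi_eq_dirac 0, sq] using hfgh 0 0
  | succ n ih =>
    refine (prekopaLeindler_volume_real.prod ih).of_measurePreserving
      ((volume_preserving_piFinSuccAbove (fun _ => ℝ) 0).symm _) fun p q => ?_
    ext j
    refine Fin.cases ?_ (fun k => ?_) j <;>
      simp [midpoint_eq_smul_add, MeasurableEquiv.piFinSuccAbove_symm_apply, mul_add]

lemma lintegral_le_of_mul_le_sq_midpoint_neg [MeasurableNeg E] {μ : Measure E} [μ.IsNegInvariant]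
    (hμ : PrekopaLeindler μ) {f h : E → ℝ≥0∞} (hf : Measurable f) (hh : Measurable h)
    (hfh : ∀ x y, f x * f y ≤ h (midpoint ℝ x (-y)) ^ 2) : ∫⁻ x, f x ∂μ ≤ ∫⁻ x, h x ∂μ := by
  have := hμ f (fun y => f (-y)) h hf (hf.comp measurable_neg) hh fun x y => by
    simpa using hfh x (-y)
  rw [lintegral_neg_eq_self, ← sq] at this
  exact (ENNReal.pow_le_pow_left_iff two_ne_zero).1 this

end PrekopaLeindler

lemma prekopaLeindler_volume (E : Type*) [NormedAddCommGroup E] [InnerProductSpace ℝ E]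
    [FiniteDimensional ℝ E] [MeasurableSpace E] [BorelSpace E] :
    PrekopaLeindler (volume : Measure E) :=
  (prekopaLeindler_volume_pi _).of_measurePreserving
    ((stdOrthonormalBasis ℝ E).measurePreserving_repr_symm.comp (PiLp.volume_preserving_toLp _))
    fun x y => by simp [midpoint_eq_smul_add]

section Symmetrisation

variable {E : Type*} [NormedAddCommGroup E] {f : E → ℝ}

lemma bddBelow_range_Ssym_integrand (hf : BddBelow (range f)) (x : E) :
    BddBelow (range fun u => (f (u + x) + f (u - x)) / 2 + ‖u‖ ^ 2 / 2) := by
  obtain ⟨c, hc⟩ := hf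
  refine ⟨c, forall_mem_range.2 fun u => ?_⟩
  have := hc (mem_range_self (u + x))
  have := hc (mem_range_self (u - x))
  have : 0 ≤ ‖u‖ ^ 2 / 2 := by positivity
  linarith

lemma Ssym_le (hf : BddBelow (range f)) (x u : E) :
    Ssym f x ≤ (f (u + x) + f (u - x)) / 2 + ‖u‖ ^ 2 / 2 :=
  ciInf_le (bddBelow_range_Ssym_integrand hf x) u

lemma upperSemicontinuous_Ssym (hf_cont : Continuous f) (hf : BddBelow (range f)) :
    UpperSemicontinuous (Ssym f) :=
  upperSemicontinuous_ciInf (bddBelow_range_Ssym_integrand hf) fun _ =>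
    (by fun_prop : Continuous _).upperSemicontinuous

lemma Ssym_midpoint_neg_le [InnerProductSpace ℝ E] (hf : BddBelow (range f)) (x y : E) :
    ‖midpoint ℝ x (-y)‖ ^ 2 / 2 + Ssym f (midpoint ℝ x (-y)) ≤
      ((‖x‖ ^ 2 / 2 + f x) + (‖y‖ ^ 2 / 2 + f y)) / 2 := by
  have hS := Ssym_le hf (midpoint ℝ x (-y)) (midpoint ℝ x y)
  have hx : midpoint ℝ x y + midpoint ℝ x (-y) = x := by
    simp only [midpoint_eq_smul_add, invOf_eq_inv]; module
  have hy : midpoint ℝ x y - midpoint ℝ x (-y) = y := by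
    simp only [midpoint_eq_smul_add, invOf_eq_inv]; module
  have hpar : ‖midpoint ℝ x y‖ ^ 2 + ‖midpoint ℝ x (-y)‖ ^ 2 = (‖x‖ ^ 2 + ‖y‖ ^ 2) / 2 := by
    have := parallelogram_law_with_norm ℝ x y
    simp only [midpoint_eq_smul_add, invOf_eq_inv, norm_smul, norm_inv, Real.norm_ofNat,
      ← sub_eq_add_neg]
    nlinarith
  rw [hx, hy] at hS
  linarith

end Symmetrisation

lemma ofReal_exp_neg_mul_le_sq {a b c : ℝ} (h : c ≤ (a + b) / 2) :
    ENNReal.ofReal (exp (-a)) * ENNReal.ofReal (exp (-b)) ≤ ENNReal.ofReal (exp (-c)) ^ 2 := by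
  rw [← ofReal_mul (exp_pos _).le, ← ofReal_pow (exp_pos _).le, ← exp_add, ← exp_nat_mul]
  exact ofReal_le_ofReal (exp_le_exp.2 (by push_cast; linarith))

lemma lintegral_gaussOf_ofReal_exp_neg (E : Type*) [NormedAddCommGroup E]
    [InnerProductSpace ℝ E] [FiniteDimensional ℝ E] [MeasurableSpace E] [BorelSpace E]
    (φ : E → ℝ) :
    ∫⁻ x, ENNReal.ofReal (exp (-φ x)) ∂gaussOf E =
      ENNReal.ofReal ((2 * π) ^ (-(Module.finrank ℝ E : ℝ) / 2)) *
        ∫⁻ x, ENNReal.ofReal (exp (-(‖x‖ ^ 2 / 2 + φ x))) := by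
  rw [gaussOf, lintegral_withDensity_eq_lintegral_mul_non_measurable _ (by fun_prop)
    (ae_of_all _ fun _ => ofReal_lt_top), ← lintegral_const_mul' _ _ ofReal_ne_top]
  congr with x
  rw [Pi.mul_apply, ← ofReal_mul (by positivity), ← ofReal_mul (by positivity), mul_assoc,
    ← exp_add]
  ring_nf

/-- Symmetrisation decreases `∫ e^{-f} dγ`: for every continuous `f` bounded from
below, `∫ e^{-f} dγ ≤ ∫ e^{-Sf} dγ`. -/
theorem lintegral_exp_neg_le_symmetrisation
    {E : Type*} [NormedAddCommGroup E] [InnerProductSpace ℝ E]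
    [FiniteDimensional ℝ E] [MeasurableSpace E] [BorelSpace E]
    (f : E → ℝ) (hf_cont : Continuous f) (hf_bdd : BddBelow (Set.range f)) :
    (∫⁻ x, ENNReal.ofReal (Real.exp (-f x)) ∂gaussOf E) ≤
      ∫⁻ x, ENNReal.ofReal (Real.exp (-Ssym f x)) ∂gaussOf E := by
  have hS : Measurable (Ssym f) := (upperSemicontinuous_Ssym hf_cont hf_bdd).measurable
  rw [lintegral_gaussOf_ofReal_exp_neg, lintegral_gaussOf_ofReal_exp_neg]
  gcongr _ * ?_
  apply lintegral_le_of_mul_le_sq_midpoint_neg (prekopaLeindler_volume E) (by fun_prop)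
    (by fun_prop)
  exact fun x y => ofReal_exp_neg_mul_le_sq (Ssym_midpoint_neg_le hf_bdd x y)
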